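/- Let p1, p2, q1, q2, r1, r2 : I → ℝ be smooth and nonvanishing on an interval I with r1' also nonvanishing, and suppose that on I: p2 = −p1 r1, 2 r1''/r1' − 3 r1'/r1 − 2 p1'/p1 = 0, p1'/p1 + p2'/p2 − 2 q1'/q1 = 0, and q1'/q1 + q2'/q2 + r2'/r2 − 2 p2'/p2 = 0. Then the functions t ↦ r1'(t)/(q1(t) r1(t)) and t ↦ q1(t) q2(t) r2(t)/p2(t)² are constant on I. -/

import Mathlib

/-!
Every constraint is a linear relation between logarithmic derivatives, and so are the
logarithmic derivatives of the two candidate first integrals. Since `p₂ = -p₁ r₁` gives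
`p₂'/p₂ = p₁'/p₁ + r₁'/r₁`, the constraints combine to make both logarithmic derivatives
vanish; a nowhere-zero function with vanishing logarithmic derivative on a connected open
set is constant there.
-/

open Filter Topology

section LogDeriv

variable {𝕜 𝕜' : Type*} [NontriviallyNormedField 𝕜] [NontriviallyNormedField 𝕜']
  [NormedAlgebra 𝕜 𝕜']

theorem IsOpen.eq_of_logDeriv_eqOn_zero [IsRCLikeNormedField 𝕜] {s : Set 𝕜}
    {f : 𝕜 → 𝕜'} (hs : IsOpen s) (hs' : IsPreconnected s) (hf : DifferentiableOn 𝕜 f s)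
    (hf0 : ∀ x ∈ s, f x ≠ 0) (hlog : s.EqOn (logDeriv f) 0) {x y : 𝕜} (hx : x ∈ s)
    (hy : y ∈ s) : f x = f y := by
  have hlog1 : s.EqOn (logDeriv f) (logDeriv fun _ => (1 : 𝕜')) := by
    rwa [logDeriv_const]
  obtain ⟨z, -, hz⟩ := (logDeriv_eqOn_iff hf (differentiableOn_const 1) hs hs'
    (fun _ _ => one_ne_zero) hf0).1 hlog1
  rw [hz hx, hz hy, Pi.smul_apply, Pi.smul_apply]

theorem logDeriv_fun_neg (f : 𝕜 → 𝕜') (x : 𝕜) :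
    logDeriv (fun z => -f z) x = logDeriv f x := by
  simp only [logDeriv_apply, deriv.fun_neg, neg_div_neg_eq]

theorem logDeriv_div_mul {f g h : 𝕜 → 𝕜'} {x : 𝕜} (hf : f x ≠ 0) (hg : g x ≠ 0)
    (hh : h x ≠ 0) (hdf : DifferentiableAt 𝕜 f x) (hdg : DifferentiableAt 𝕜 g x)
    (hdh : DifferentiableAt 𝕜 h x) :
    logDeriv (fun z => f z / (g z * h z)) x = logDeriv f x - logDeriv g x - logDeriv h x := by
  rw [logDeriv_div (g := fun z => g z * h z) x hf (mul_ne_zero hg hh) hdf (hdg.mul hdh),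
    logDeriv_mul x hg hh hdg hdh]
  ring

theorem logDeriv_mul_mul_div_sq {f g h k : 𝕜 → 𝕜'} {x : 𝕜} (hf : f x ≠ 0)
    (hg : g x ≠ 0) (hh : h x ≠ 0) (hk : k x ≠ 0) (hdf : DifferentiableAt 𝕜 f x)
    (hdg : DifferentiableAt 𝕜 g x) (hdh : DifferentiableAt 𝕜 h x)
    (hdk : DifferentiableAt 𝕜 k x) :
    logDeriv (fun z => f z * g z * h z / k z ^ 2) x
      = logDeriv f x + logDeriv g x + logDeriv h x - 2 * logDeriv k x := by
  rw [logDeriv_div (f := fun z => f z * g z * h z) (g := fun z => k z ^ 2) x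
      (mul_ne_zero (mul_ne_zero hf hg) hh) (pow_ne_zero 2 hk) ((hdf.mul hdg).mul hdh)
      (hdk.pow 2),
    logDeriv_mul (f := fun z => f z * g z) x (mul_ne_zero hf hg) hh (hdf.mul hdg) hdh,
    logDeriv_mul x hf hg hdf hdg, logDeriv_fun_pow hdk]
  push_cast
  ring

end LogDeriv

theorem logDeriv_deriv_div_mul_eq_zero {p₁ p₂ q r : ℝ → ℝ} {x : ℝ}
    (hp₁ : p₁ x ≠ 0) (hq : q x ≠ 0) (hr : r x ≠ 0) (hr' : deriv r x ≠ 0)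
    (hdp₁ : DifferentiableAt ℝ p₁ x) (hdq : DifferentiableAt ℝ q x)
    (hdr : DifferentiableAt ℝ r x) (hdr' : DifferentiableAt ℝ (deriv r) x)
    (hp₂ : p₂ =ᶠ[𝓝 x] fun z => -(p₁ z * r z))
    (hA : 2 * logDeriv (deriv r) x - 3 * logDeriv r x - 2 * logDeriv p₁ x = 0)
    (hB : logDeriv p₁ x + logDeriv p₂ x - 2 * logDeriv q x = 0) :
    logDeriv (fun z => deriv r z / (q z * r z)) x = 0 := by
  have hp₂log : logDeriv p₂ x = logDeriv p₁ x + logDeriv r x := by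
    rw [(logDeriv_congr_nhds hp₂).eq_of_nhds, logDeriv_fun_neg,
      logDeriv_mul x hp₁ hr hdp₁ hdr]
  rw [logDeriv_div_mul hr' hq hr hdr' hdq hdr]
  linear_combination (hA + hB - hp₂log) / 2

theorem integrable_case_first_integrals
    (I : Set ℝ) (hIopen : IsOpen I) (hIconn : I.OrdConnected)
    (p1 p2 q1 q2 r1 r2 : ℝ → ℝ)
    (hp1 : ContDiffOn ℝ (⊤ : ℕ∞) p1 I) (hp2 : ContDiffOn ℝ (⊤ : ℕ∞) p2 I)
    (hq1 : ContDiffOn ℝ (⊤ : ℕ∞) q1 I) (hq2 : ContDiffOn ℝ (⊤ : ℕ∞) q2 I)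
    (hr1 : ContDiffOn ℝ (⊤ : ℕ∞) r1 I) (hr2 : ContDiffOn ℝ (⊤ : ℕ∞) r2 I)
    (hp1ne : ∀ t ∈ I, p1 t ≠ 0) (hp2ne : ∀ t ∈ I, p2 t ≠ 0)
    (hq1ne : ∀ t ∈ I, q1 t ≠ 0) (hq2ne : ∀ t ∈ I, q2 t ≠ 0)
    (hr1ne : ∀ t ∈ I, r1 t ≠ 0) (hr2ne : ∀ t ∈ I, r2 t ≠ 0)
    (hr1'ne : ∀ t ∈ I, deriv r1 t ≠ 0)
    (hA3 : ∀ t ∈ I, p2 t = -(p1 t * r1 t))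
    (hconstrA : ∀ t ∈ I, 2 * deriv (deriv r1) t / deriv r1 t
        - 3 * deriv r1 t / r1 t - 2 * deriv p1 t / p1 t = 0)
    (hconstrB : ∀ t ∈ I, deriv p1 t / p1 t + deriv p2 t / p2 t
        - 2 * deriv q1 t / q1 t = 0)
    (hconstrC : ∀ t ∈ I, deriv q1 t / q1 t + deriv q2 t / q2 t
        + deriv r2 t / r2 t - 2 * deriv p2 t / p2 t = 0) :
    (∀ s ∈ I, ∀ t ∈ I, deriv r1 s / (q1 s * r1 s) = deriv r1 t / (q1 t * r1 t))
    ∧ (∀ s ∈ I, ∀ t ∈ I,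
        q1 s * q2 s * r2 s / (p2 s)^2 = q1 t * q2 t * r2 t / (p2 t)^2) := by
  have hd {f : ℝ → ℝ} (hf : ContDiffOn ℝ (⊤ : ℕ∞) f I) : DifferentiableOn ℝ f I :=
    hf.differentiableOn (by simp)
  have hdAt {f : ℝ → ℝ} (hf : ContDiffOn ℝ (⊤ : ℕ∞) f I) {t : ℝ} (ht : t ∈ I) :
      DifferentiableAt ℝ f t :=
    (hd hf).differentiableAt (hIopen.mem_nhds ht)
  have hr1' : ContDiffOn ℝ (⊤ : ℕ∞) (deriv r1) I := hr1.deriv_of_isOpen hIopen (by simp)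
  refine ⟨fun s hs t ht => hIopen.eq_of_logDeriv_eqOn_zero
      (f := fun t => deriv r1 t / (q1 t * r1 t)) hIconn.isPreconnected
      ((hd hr1').div ((hd hq1).mul (hd hr1)) fun t ht => mul_ne_zero (hq1ne t ht) (hr1ne t ht))
      (fun t ht => div_ne_zero (hr1'ne t ht) (mul_ne_zero (hq1ne t ht) (hr1ne t ht)))
      (fun t ht => ?_) hs ht,
    fun s hs t ht => hIopen.eq_of_logDeriv_eqOn_zero
      (f := fun t => q1 t * q2 t * r2 t / p2 t ^ 2) hIconn.isPreconnected
      ((((hd hq1).mul (hd hq2)).mul (hd hr2)).div ((hd hp2).pow 2)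
        fun t ht => pow_ne_zero 2 (hp2ne t ht))
      (fun t ht => div_ne_zero (mul_ne_zero (mul_ne_zero (hq1ne t ht) (hq2ne t ht))
        (hr2ne t ht)) (pow_ne_zero 2 (hp2ne t ht)))
      (fun t ht => ?_) hs ht⟩
  · exact logDeriv_deriv_div_mul_eq_zero (hp1ne t ht) (hq1ne t ht) (hr1ne t ht) (hr1'ne t ht)
      (hdAt hp1 ht) (hdAt hq1 ht) (hdAt hr1 ht) (hdAt hr1' ht)
      (eventually_of_mem (hIopen.mem_nhds ht) hA3)
      (by simpa only [logDeriv_apply, mul_div_assoc] using hconstrA t ht)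
      (by simpa only [logDeriv_apply, mul_div_assoc] using hconstrB t ht)
  · rw [Pi.zero_apply, logDeriv_mul_mul_div_sq (hq1ne t ht) (hq2ne t ht) (hr2ne t ht)
      (hp2ne t ht) (hdAt hq1 ht) (hdAt hq2 ht) (hdAt hr2 ht) (hdAt hp2 ht)]
    simpa only [logDeriv_apply, mul_div_assoc] using hconstrC t ht
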